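/- arXiv:1105.1270 — 2 statements merged into one kernel-verified Lean document; each statement's English description precedes it below -/
import Mathlib

section
/- Let X be a convex subset of a real vector space with metric d satisfying d(λy + (1-λ)x, λz + (1-λ)x) ≤ λ·d(y,z). Then d is translation-invariant: if x₀, x₁, y₀, y₁ ∈ X satisfy y₁ - x₁ = y₀ - x₀, then d(x₁,y₁) = d(x₀,y₀). -/
theorem stmt7 {E : Type*} [AddCommGroup E] [Module ℝ E] (X : Set E) (hX : Convex ℝ X)
    (d : E → E → ℝ)
    (hd_eq : ∀ x ∈ X, ∀ y ∈ X, (d x y = 0 ↔ x = y))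
    (hd_symm : ∀ x ∈ X, ∀ y ∈ X, d x y = d y x)
    (hd_tri : ∀ x ∈ X, ∀ y ∈ X, ∀ z ∈ X, d x z ≤ d x y + d y z)
    (hcontr : ∀ x ∈ X, ∀ y ∈ X, ∀ z ∈ X, ∀ l ∈ Set.Icc (0:ℝ) 1,
      d (l • y + (1 - l) • x) (l • z + (1 - l) • x) ≤ l * d y z) :
    ∀ x₀ ∈ X, ∀ x₁ ∈ X, ∀ y₀ ∈ X, ∀ y₁ ∈ X,
      (y₁ : E) - x₁ = y₀ - x₀ → d x₁ y₁ = d x₀ y₀ := by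
  -- nonnegativity of d on X
  have hnn : ∀ x ∈ X, ∀ y ∈ X, 0 ≤ d x y := by
    intro x hx y hy
    have h1 := hd_tri x hx y hy x hx
    have h2 := hd_symm x hx y hy
    have h3 := (hd_eq x hx x hx).mpr rfl
    linarith
  -- midpoint lemma : d a b ≤ 2 * d a (mid a b)
  have hmid : ∀ a ∈ X, ∀ b ∈ X, d a b ≤ 2 * d a ((1/2 : ℝ) • a + (1/2 : ℝ) • b) := by
    intro a ha b hb
    have hm : (1/2 : ℝ) • a + (1/2 : ℝ) • b ∈ X := hX ha hb (by norm_num) (by norm_num) (by norm_num)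
    have htri := hd_tri a ha _ hm b hb
    have hc := hcontr b hb a ha b hb (1/2) ⟨by norm_num, by norm_num⟩
    have e1 : (1/2 : ℝ) • a + (1 - 1/2 : ℝ) • b = (1/2 : ℝ) • a + (1/2 : ℝ) • b := by norm_num
    have e2 : (1/2 : ℝ) • b + (1 - 1/2 : ℝ) • b = b := by module
    rw [e1, e2] at hc
    linarith
  intro x₀ hx₀ x₁ hx₁ y₀ hy₀ y₁ hy₁ hv
  have hy1 : y₁ = y₀ - x₀ + x₁ := by
    have := sub_eq_iff_eq_add.mp hv
    rw [this]
  subst hy1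
  set P : ℝ → E := fun s => (1 - s) • x₀ + s • x₁ with hPdef
  set Q : ℝ → E := fun s => (1 - s) • y₀ + s • (y₀ - x₀ + x₁) with hQdef
  have hPmem : ∀ s ∈ Set.Icc (0:ℝ) 1, P s ∈ X := by
    intro s hs
    have h : (1 - s) • x₀ + s • x₁ ∈ X := hX hx₀ hx₁ (by linarith [hs.2]) hs.1 (by ring)
    simpa [hPdef] using h
  have hQmem : ∀ s ∈ Set.Icc (0:ℝ) 1, Q s ∈ X := by
    intro s hs
    have h : (1 - s) • y₀ + s • (y₀ - x₀ + x₁) ∈ X := hX hy₀ hy₁ (by linarith [hs.2]) hs.1 (by ring)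
    simpa [hQdef] using h
  -- key halving step
  have step : ∀ r ∈ Set.Icc (0:ℝ) 1, ∀ s ∈ Set.Icc (0:ℝ) 1,
      d (P ((r + s)/2)) (Q ((r + s)/2)) ≤ d (P s) (Q s) := by
    intro r hr s hs
    have hts : (r + s)/2 ∈ Set.Icc (0:ℝ) 1 := ⟨by linarith [hr.1, hs.1], by linarith [hr.2, hs.2]⟩
    have hc := hcontr (P r) (hPmem r hr) (P s) (hPmem s hs) (Q s) (hQmem s hs) (1/2)
      ⟨by norm_num, by norm_num⟩
    have e1 : (1/2 : ℝ) • P s + (1 - 1/2 : ℝ) • P r = P ((r + s)/2) := by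
      simp only [hPdef]; module
    have e2 : (1/2 : ℝ) • Q s + (1 - 1/2 : ℝ) • P r
        = (1/2 : ℝ) • P ((r + s)/2) + (1/2 : ℝ) • Q ((r + s)/2) := by
      simp only [hPdef, hQdef]; module
    rw [e1, e2] at hc
    have hm := hmid (P ((r + s)/2)) (hPmem _ hts) (Q ((r + s)/2)) (hQmem _ hts)
    linarith
  have hpow : ∀ n : ℕ, ((1:ℝ)/2)^n ∈ Set.Icc (0:ℝ) 1 := by
    intro n
    constructor
    · positivity
    · exact pow_le_one₀ (by norm_num) (by norm_num)
  have h0 : (0:ℝ) ∈ Set.Icc (0:ℝ) 1 := ⟨le_refl _, by norm_num⟩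
  have h1 : (1:ℝ) ∈ Set.Icc (0:ℝ) 1 := ⟨by norm_num, le_refl _⟩
  -- iterated halving towards 0 starting from 1
  have iter1 : ∀ n : ℕ, d (P (((1:ℝ)/2)^n)) (Q (((1:ℝ)/2)^n)) ≤ d (P 1) (Q 1) := by
    intro n
    induction n with
    | zero => simp
    | succ n ih =>
        have := step 0 h0 (((1:ℝ)/2)^n) (hpow n)
        have e : ((0:ℝ) + ((1:ℝ)/2)^n)/2 = ((1:ℝ)/2)^(n+1) := by ring
        rw [e] at this
        linarith
  -- iterated halving towards 1 starting from 0
  have iter2 : ∀ n : ℕ, d (P (1 - ((1:ℝ)/2)^n)) (Q (1 - ((1:ℝ)/2)^n)) ≤ d (P 0) (Q 0) := by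
    intro n
    induction n with
    | zero => simp
    | succ n ih =>
        have hmem : (1 - ((1:ℝ)/2)^n) ∈ Set.Icc (0:ℝ) 1 :=
          ⟨by linarith [(hpow n).2], by linarith [(hpow n).1]⟩
        have := step 1 h1 (1 - ((1:ℝ)/2)^n) hmem
        have e : ((1:ℝ) + (1 - ((1:ℝ)/2)^n))/2 = 1 - ((1:ℝ)/2)^(n+1) := by ring
        rw [e] at this
        linarith
  -- endpoint identities
  have hP0 : P 0 = x₀ := by simp [hPdef]
  have hQ0 : Q 0 = y₀ := by simp [hQdef]
  have hP1 : P 1 = x₁ := by simp [hPdef]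
  have hQ1 : Q 1 = y₀ - x₀ + x₁ := by simp [hQdef]
  -- Lipschitz-type bounds at the endpoints
  have lip0 : ∀ ε ∈ Set.Icc (0:ℝ) 1,
      d x₀ y₀ ≤ d (P ε) (Q ε) + ε * (d x₁ x₀ + d (y₀ - x₀ + x₁) y₀) := by
    intro ε hε
    have hcP := hcontr x₀ hx₀ x₁ hx₁ x₀ hx₀ ε hε
    have eP1 : ε • x₁ + (1 - ε) • x₀ = P ε := by simp only [hPdef]; module
    have eP2 : ε • x₀ + (1 - ε) • x₀ = x₀ := by module
    rw [eP1, eP2] at hcP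
    have hcQ := hcontr y₀ hy₀ (y₀ - x₀ + x₁) hy₁ y₀ hy₀ ε hε
    have eQ1 : ε • (y₀ - x₀ + x₁) + (1 - ε) • y₀ = Q ε := by simp only [hQdef]; module
    have eQ2 : ε • y₀ + (1 - ε) • y₀ = y₀ := by module
    rw [eQ1, eQ2] at hcQ
    have ht1 := hd_tri x₀ hx₀ (P ε) (hPmem ε hε) y₀ hy₀
    have ht2 := hd_tri (P ε) (hPmem ε hε) (Q ε) (hQmem ε hε) y₀ hy₀
    have hs1 := hd_symm x₀ hx₀ (P ε) (hPmem ε hε)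
    nlinarith [hε.1]
  have lip1 : ∀ ε ∈ Set.Icc (0:ℝ) 1,
      d x₁ (y₀ - x₀ + x₁) ≤ d (P (1 - ε)) (Q (1 - ε)) + ε * (d x₀ x₁ + d y₀ (y₀ - x₀ + x₁)) := by
    intro ε hε
    have hε' : (1 - ε) ∈ Set.Icc (0:ℝ) 1 := ⟨by linarith [hε.2], by linarith [hε.1]⟩
    have hcP := hcontr x₁ hx₁ x₀ hx₀ x₁ hx₁ ε hε
    have eP1 : ε • x₀ + (1 - ε) • x₁ = P (1 - ε) := by simp only [hPdef]; module
    have eP2 : ε • x₁ + (1 - ε) • x₁ = x₁ := by module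
    rw [eP1, eP2] at hcP
    have hcQ := hcontr (y₀ - x₀ + x₁) hy₁ y₀ hy₀ (y₀ - x₀ + x₁) hy₁ ε hε
    have eQ1 : ε • y₀ + (1 - ε) • (y₀ - x₀ + x₁) = Q (1 - ε) := by simp only [hQdef]; module
    have eQ2 : ε • (y₀ - x₀ + x₁) + (1 - ε) • (y₀ - x₀ + x₁) = y₀ - x₀ + x₁ := by module
    rw [eQ1, eQ2] at hcQ
    have ht1 := hd_tri x₁ hx₁ (P (1 - ε)) (hPmem _ hε') (y₀ - x₀ + x₁) hy₁
    have ht2 := hd_tri (P (1 - ε)) (hPmem _ hε') (Q (1 - ε)) (hQmem _ hε') (y₀ - x₀ + x₁) hy₁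
    have hs1 := hd_symm x₁ hx₁ (P (1 - ε)) (hPmem _ hε')
    nlinarith [hε.1]
  -- combine : two inequalities up to (1/2)^n error
  have A : ∀ n : ℕ, d x₀ y₀ ≤ d x₁ (y₀ - x₀ + x₁)
      + ((1:ℝ)/2)^n * (d x₁ x₀ + d (y₀ - x₀ + x₁) y₀) := by
    intro n
    have h1 := lip0 _ (hpow n)
    have h2 := iter1 n
    rw [hP1, hQ1] at h2
    linarith
  have B : ∀ n : ℕ, d x₁ (y₀ - x₀ + x₁) ≤ d x₀ y₀
      + ((1:ℝ)/2)^n * (d x₀ x₁ + d y₀ (y₀ - x₀ + x₁)) := by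
    intro n
    have h1 := lip1 _ (hpow n)
    have h2 := iter2 n
    rw [hP0, hQ0] at h2
    linarith
  have key : ∀ (a b L : ℝ), 0 ≤ L → (∀ n : ℕ, a ≤ b + ((1:ℝ)/2)^n * L) → a ≤ b := by
    intro a b L hL h
    refine le_of_forall_pos_le_add ?_
    intro ε hε
    obtain ⟨n, hn⟩ := exists_pow_lt_of_lt_one (div_pos hε (by linarith : (0:ℝ) < L + 1))
      (by norm_num : (1:ℝ)/2 < 1)
    have hpn : (0:ℝ) ≤ ((1:ℝ)/2)^n := by positivity
    have h1 : ((1:ℝ)/2)^n * (L + 1) < ε :=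
      (lt_div_iff₀ (by linarith : (0:ℝ) < L + 1)).mp hn
    have h2 : ((1:ℝ)/2)^n * L ≤ ((1:ℝ)/2)^n * (L + 1) := by nlinarith
    linarith [h n]
  have hL1 : 0 ≤ d x₁ x₀ + d (y₀ - x₀ + x₁) y₀ :=
    add_nonneg (hnn x₁ hx₁ x₀ hx₀) (hnn _ hy₁ y₀ hy₀)
  have hL2 : 0 ≤ d x₀ x₁ + d y₀ (y₀ - x₀ + x₁) :=
    add_nonneg (hnn x₀ hx₀ x₁ hx₁) (hnn y₀ hy₀ _ hy₁)
  exact le_antisymm (key _ _ _ hL2 B) (key _ _ _ hL1 A)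
end

section
/- Let X be a convex subset of a real vector space E whose metric d satisfies d(λy + (1-λ)x, λz + (1-λ)x) ≤ λ·d(y,z) for all x,y,z ∈ X and λ ∈ [0,1]. Then there is a norm ‖·‖ on the linear span of X - X such that d(x,y) = ‖x - y‖ for all x,y ∈ X. -/
theorem stmt8 {E : Type*} [AddCommGroup E] [Module ℝ E] (X : Set E) (hX : Convex ℝ X)
    (d : E → E → ℝ)
    (hd_eq : ∀ x ∈ X, ∀ y ∈ X, (d x y = 0 ↔ x = y))
    (hd_symm : ∀ x ∈ X, ∀ y ∈ X, d x y = d y x)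
    (hd_tri : ∀ x ∈ X, ∀ y ∈ X, ∀ z ∈ X, d x z ≤ d x y + d y z)
    (hcontr : ∀ x ∈ X, ∀ y ∈ X, ∀ z ∈ X, ∀ l ∈ Set.Icc (0:ℝ) 1,
      d (l • y + (1 - l) • x) (l • z + (1 - l) • x) ≤ l * d y z) :
    ∃ N : E → ℝ,
      (∀ v ∈ Submodule.span ℝ {v : E | ∃ x ∈ X, ∃ y ∈ X, v = x - y}, 0 ≤ N v) ∧
      (∀ v ∈ Submodule.span ℝ {v : E | ∃ x ∈ X, ∃ y ∈ X, v = x - y}, (N v = 0 ↔ v = 0)) ∧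
      (∀ a : ℝ, ∀ v ∈ Submodule.span ℝ {v : E | ∃ x ∈ X, ∃ y ∈ X, v = x - y},
        N (a • v) = |a| * N v) ∧
      (∀ v ∈ Submodule.span ℝ {v : E | ∃ x ∈ X, ∃ y ∈ X, v = x - y},
        ∀ w ∈ Submodule.span ℝ {v : E | ∃ x ∈ X, ∃ y ∈ X, v = x - y},
        N (v + w) ≤ N v + N w) ∧
      (∀ x ∈ X, ∀ y ∈ X, d x y = N (x - y)) := by
  by_cases hne : ∃ x₀, x₀ ∈ X
  swap
  · -- X is empty: the span is trivial, N = 0 works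
    push_neg at hne
    have hS : {v : E | ∃ x ∈ X, ∃ y ∈ X, v = x - y} = (∅ : Set E) := by
      ext v; simp [hne]
    refine ⟨fun _ => 0, ?_, ?_, ?_, ?_, ?_⟩
    · intro v _; exact le_refl 0
    · intro v hv
      rw [hS, Submodule.span_empty, Submodule.mem_bot] at hv
      simp [hv]
    · intro a v _; simp
    · intro v _ w _; simp
    · intro x hx; exact absurd hx (hne x)
  obtain ⟨x₀, hx₀⟩ := hne
  -- basic facts
  have hd0 : ∀ x ∈ X, d x x = 0 := fun x hx => (hd_eq x hx x hx).mpr rfl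
  have hdnn : ∀ x ∈ X, ∀ y ∈ X, 0 ≤ d x y := by
    intro x hx y hy
    have h1 := hd_tri x hx y hy x hx
    have h2 := hd0 x hx
    have h3 := hd_symm x hx y hy
    linarith
  -- homogeneity along segments
  have H : ∀ a ∈ X, ∀ b ∈ X, ∀ l : ℝ, 0 ≤ l → l ≤ 1 →
      d a (l • b + (1 - l) • a) = l * d a b := by
    intro a ha b hb l hl0 hl1
    have hm : l • b + (1 - l) • a ∈ X := hX hb ha hl0 (by linarith) (by ring)
    have h1 := hcontr a ha b hb a ha l ⟨hl0, hl1⟩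
    have ea : l • a + (1 - l) • a = a := by module
    rw [ea] at h1
    have h2 := hcontr b hb a ha b hb (1 - l) ⟨by linarith, by linarith⟩
    have eb1 : (1 - l) • a + (1 - (1 - l)) • b = l • b + (1 - l) • a := by module
    have eb2 : (1 - l) • b + (1 - (1 - l)) • b = b := by module
    rw [eb1, eb2] at h2
    have h3 := hd_tri a ha (l • b + (1 - l) • a) hm b hb
    have s1 := hd_symm a ha (l • b + (1 - l) • a) hm
    have s2 := hd_symm b hb a ha
    nlinarith
  -- translation invariance, one-sided
  have TI1 : ∀ a ∈ X, ∀ b ∈ X, ∀ a' ∈ X, ∀ b' ∈ X, a - b = a' - b' → d a b ≤ d a' b' := by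
    intro a ha b hb a' ha' b' hb' e
    have key : ∀ t : ℝ, 0 < t → t < 1 →
        d a b ≤ d a' b' + t * (d a a' + d b b') := by
      intro t ht0 ht1
      have hpX : t • a' + (1 - t) • a ∈ X := hX ha' ha ht0.le (by linarith) (by ring)
      have hqX : t • b' + (1 - t) • b ∈ X := hX hb' hb ht0.le (by linarith) (by ring)
      have h2' : a + b' = a' + b := sub_eq_sub_iff_add_eq_add.mp e
      have hb'e : b' = a' - a + b := by
        calc b' = a + b' - a := by abel
        _ = a' + b - a := by rw [h2']
        _ = a' - a + b := by abel
      have hr : t • b' + (1 - t) • a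
          = t • (t • b' + (1 - t) • b) + (1 - t) • (t • a' + (1 - t) • a) := by
        rw [hb'e]; module
      have h1 := hcontr a ha a' ha' b' hb' t ⟨ht0.le, ht1.le⟩
      rw [hr] at h1
      have h2 := H (t • a' + (1 - t) • a) hpX (t • b' + (1 - t) • b) hqX t ht0.le ht1.le
      rw [h2] at h1
      have hpq : d (t • a' + (1 - t) • a) (t • b' + (1 - t) • b) ≤ d a' b' :=
        le_of_mul_le_mul_left h1 ht0
      have hap : d a (t • a' + (1 - t) • a) = t * d a a' := H a ha a' ha' t ht0.le ht1.le
      have hbq : d b (t • b' + (1 - t) • b) = t * d b b' := H b hb b' hb' t ht0.le ht1.le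
      have tri1 := hd_tri a ha (t • a' + (1 - t) • a) hpX b hb
      have tri2 := hd_tri (t • a' + (1 - t) • a) hpX (t • b' + (1 - t) • b) hqX b hb
      have s1 := hd_symm b hb (t • b' + (1 - t) • b) hqX
      linarith
    by_contra hcon
    push_neg at hcon
    set C := d a a' + d b b' with hC
    have hC0 : 0 ≤ C := add_nonneg (hdnn a ha a' ha') (hdnn b hb b' hb')
    set ε := d a b - d a' b' with hε
    have hε0 : 0 < ε := by simp only [hε]; linarith
    set t := min (1/2) (ε / (2 * C + 2)) with htdef
    have ht0 : 0 < t := lt_min (by norm_num) (div_pos hε0 (by linarith))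
    have ht1 : t < 1 := lt_of_le_of_lt (min_le_left _ _) (by norm_num)
    have hkey := key t ht0 ht1
    have htC : t * C < ε := by
      have h1 : t ≤ ε / (2 * C + 2) := min_le_right _ _
      have h2 : t * C ≤ ε / (2 * C + 2) * C :=
        mul_le_mul_of_nonneg_right h1 hC0
      have h3 : ε / (2 * C + 2) * C < ε := by
        rw [div_mul_eq_mul_div, div_lt_iff₀ (by linarith)]
        nlinarith
      exact lt_of_le_of_lt h2 h3
    simp only [hε] at htC
    linarith
  have TI : ∀ a ∈ X, ∀ b ∈ X, ∀ a' ∈ X, ∀ b' ∈ X, a - b = a' - b' → d a b = d a' b' :=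
    fun a ha b hb a' ha' b' hb' e =>
      le_antisymm (TI1 a ha b hb a' ha' b' hb' e) (TI1 a' ha' b' hb' a ha b hb e.symm)
  -- well-definedness of the candidate norm on the cone
  have WD : ∀ t s : ℝ, 0 ≤ t → 0 ≤ s → ∀ x ∈ X, ∀ y ∈ X, ∀ x' ∈ X, ∀ y' ∈ X,
      t • (x - y) = s • (x' - y') → t * d x y = s * d x' y' := by
    intro t s ht hs x hx y hy x' hx' y' hy' e
    rcases eq_or_lt_of_le ht with ht0 | ht0
    · -- t = 0
      rw [← ht0, zero_smul] at e
      rcases smul_eq_zero.mp e.symm with hs0 | hxy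
      · rw [← ht0, hs0]; simp
      · rw [← ht0, zero_mul, (hd_eq x' hx' y' hy').mpr (sub_eq_zero.mp hxy), mul_zero]
    rcases eq_or_lt_of_le hs with hs0 | hs0
    · rw [← hs0, zero_smul] at e
      rcases smul_eq_zero.mp e with h | hxy
      · exact absurd h (ne_of_gt ht0)
      · rw [(hd_eq x hx y hy).mpr (sub_eq_zero.mp hxy), mul_zero, ← hs0, zero_mul]
    -- main case: t, s > 0
    have hT : (0:ℝ) < t + s := by linarith
    set lam := t / (t + s) with hlamd
    set mu := s / (t + s) with hmud
    have hlm : lam + mu = 1 := by rw [hlamd, hmud]; field_simp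
    have hlam0 : 0 ≤ lam := div_nonneg ht (by linarith)
    have hlam1 : lam ≤ 1 := by rw [hlamd, div_le_one hT]; linarith
    have hmu0 : 0 ≤ mu := div_nonneg hs (by linarith)
    have hmu1 : mu ≤ 1 := by rw [hmud, div_le_one hT]; linarith
    have hcX : lam • x + mu • y' ∈ X := hX hx hy' hlam0 hmu0 hlm
    have hqX : lam • x + mu • x' ∈ X := hX hx hx' hlam0 hmu0 hlm
    have hm1X : lam • y + (1 - lam) • x ∈ X := hX hy hx hlam0 (by linarith) (by ring)
    have hm2X : mu • y' + (1 - mu) • x' ∈ X := hX hy' hx' hmu0 (by linarith) (by ring)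
    have e' : lam • (x - y) = mu • (x' - y') := by
      rw [hlamd, hmud, div_eq_inv_mul, div_eq_inv_mul, mul_smul, mul_smul, e]
    have hq2 : (lam • x + mu • x') - (lam • x + mu • y') = mu • (x' - y') := by module
    have e1 : x - (lam • y + (1 - lam) • x)
        = (lam • x + mu • x') - (lam • x + mu • y') := by
      rw [hq2, ← e']
      have hmu' : (1:ℝ) - lam = mu := by linarith
      rw [show (1:ℝ) - lam = mu from hmu']
      have : x - (lam • y + mu • x) = lam • (x - y) := by
        rw [show mu = 1 - lam by linarith]; module
      rw [this]
    have e2 : x' - (mu • y' + (1 - mu) • x')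
        = (lam • x + mu • x') - (lam • x + mu • y') := by
      rw [hq2]
      rw [show (1:ℝ) - mu = lam by linarith]
      rw [show lam = 1 - mu by linarith]; module
    have d1 : d x (lam • y + (1 - lam) • x)
        = d (lam • x + mu • x') (lam • x + mu • y') :=
      TI x hx (lam • y + (1 - lam) • x) hm1X (lam • x + mu • x') hqX
        (lam • x + mu • y') hcX e1
    have d2 : d x' (mu • y' + (1 - mu) • x')
        = d (lam • x + mu • x') (lam • x + mu • y') :=
      TI x' hx' (mu • y' + (1 - mu) • x') hm2X (lam • x + mu • x') hqX
        (lam • x + mu • y') hcX e2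
    have hH1 : d x (lam • y + (1 - lam) • x) = lam * d x y := H x hx y hy lam hlam0 hlam1
    have hH2 : d x' (mu • y' + (1 - mu) • x') = mu * d x' y' := H x' hx' y' hy' mu hmu0 hmu1
    have hmain : lam * d x y = mu * d x' y' := by rw [← hH1, ← hH2, d1, d2]
    have hl2 : (t + s) * lam = t := by rw [hlamd]; field_simp
    have hs2 : (t + s) * mu = s := by rw [hmud]; field_simp
    calc t * d x y = ((t + s) * lam) * d x y := by rw [hl2]
      _ = (t + s) * (lam * d x y) := by ring
      _ = (t + s) * (mu * d x' y') := by rw [hmain]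
      _ = ((t + s) * mu) * d x' y' := by ring
      _ = s * d x' y' := by rw [hs2]
  -- the candidate norm
  set Nf : E → ℝ := fun v =>
    sInf {r | ∃ t : ℝ, ∃ x y : E, 0 ≤ t ∧ x ∈ X ∧ y ∈ X ∧ v = t • (x - y) ∧ r = t * d x y} with hNf
  have Nval : ∀ (t : ℝ) (x y : E), 0 ≤ t → x ∈ X → y ∈ X → ∀ v, v = t • (x - y) →
      Nf v = t * d x y := by
    intro t x y ht hx hy v hv
    have hset : {r | ∃ t' : ℝ, ∃ x' y' : E, 0 ≤ t' ∧ x' ∈ X ∧ y' ∈ X ∧ v = t' • (x' - y') ∧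
        r = t' * d x' y'} = {t * d x y} := by
      ext r
      simp only [Set.mem_setOf_eq, Set.mem_singleton_iff]
      constructor
      · rintro ⟨t', x', y', ht', hx', hy', hv', hr⟩
        rw [hr]
        exact WD t' t ht' ht x' hx' y' hy' x hx y hy (by rw [← hv', hv])
      · intro hr
        exact ⟨t, x, y, ht, hx, hy, hv, hr⟩
    rw [hNf]
    simp only []
    rw [hset, csInf_singleton]
  -- every element of the span is t • (x - y)
  have hspan : ∀ v ∈ Submodule.span ℝ {v : E | ∃ x ∈ X, ∃ y ∈ X, v = x - y},
      ∃ t : ℝ, ∃ x y : E, 0 ≤ t ∧ x ∈ X ∧ y ∈ X ∧ v = t • (x - y) := by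
    intro v hv
    induction hv using Submodule.span_induction with
    | mem v hv =>
      obtain ⟨x, hx, y, hy, rfl⟩ := hv
      exact ⟨1, x, y, zero_le_one, hx, hy, (one_smul ℝ _).symm⟩
    | zero => exact ⟨0, x₀, x₀, le_refl 0, hx₀, hx₀, by simp⟩
    | add v w hv hw ihv ihw =>
      obtain ⟨t, x, y, ht, hx, hy, hvr⟩ := ihv
      obtain ⟨s, x', y', hs, hx', hy', hwr⟩ := ihw
      by_cases hts : t + s = 0
      · have ht0 : t = 0 := by linarith
        have hs0 : s = 0 := by linarith
        refine ⟨0, x₀, x₀, le_refl 0, hx₀, hx₀, ?_⟩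
        rw [hvr, hwr, ht0, hs0]; simp
      · have hT : (0:ℝ) < t + s := lt_of_le_of_ne (by linarith) (Ne.symm hts)
        have hc1 : 0 ≤ t / (t + s) := div_nonneg ht hT.le
        have hc2 : 0 ≤ s / (t + s) := div_nonneg hs hT.le
        have hc3 : t / (t + s) + s / (t + s) = 1 := by field_simp
        refine ⟨t + s, (t / (t + s)) • x + (s / (t + s)) • x',
          (t / (t + s)) • y + (s / (t + s)) • y', hT.le,
          hX hx hx' hc1 hc2 hc3, hX hy hy' hc1 hc2 hc3, ?_⟩
        rw [hvr, hwr]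
        match_scalars <;> (field_simp; try ring)
    | smul a v hv ih =>
      obtain ⟨t, x, y, ht, hx, hy, hvr⟩ := ih
      rcases le_or_gt 0 a with ha | ha
      · exact ⟨a * t, x, y, mul_nonneg ha ht, hx, hy, by rw [hvr, smul_smul]⟩
      · refine ⟨(-a) * t, y, x, mul_nonneg (by linarith) ht, hy, hx, ?_⟩
        rw [hvr]; module
  refine ⟨Nf, ?_, ?_, ?_, ?_, ?_⟩
  · -- nonneg
    intro v hv
    obtain ⟨t, x, y, ht, hx, hy, hvr⟩ := hspan v hv
    rw [Nval t x y ht hx hy v hvr]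
    exact mul_nonneg ht (hdnn x hx y hy)
  · -- zero iff
    intro v hv
    obtain ⟨t, x, y, ht, hx, hy, hvr⟩ := hspan v hv
    rw [Nval t x y ht hx hy v hvr]
    constructor
    · intro h0
      rcases mul_eq_zero.mp h0 with h | h
      · rw [hvr, h, zero_smul]
      · rw [hvr, (hd_eq x hx y hy).mp h, sub_self, smul_zero]
    · intro h0
      rw [h0] at hvr
      rcases smul_eq_zero.mp hvr.symm with h | h
      · rw [h, zero_mul]
      · rw [(hd_eq x hx y hy).mpr (sub_eq_zero.mp h), mul_zero]
  · -- homogeneity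
    intro a v hv
    obtain ⟨t, x, y, ht, hx, hy, hvr⟩ := hspan v hv
    rcases le_or_gt 0 a with ha | ha
    · rw [Nval (a * t) x y (mul_nonneg ha ht) hx hy (a • v) (by rw [hvr, smul_smul]),
        Nval t x y ht hx hy v hvr, abs_of_nonneg ha]
      ring
    · rw [Nval ((-a) * t) y x (mul_nonneg (by linarith) ht) hy hx (a • v)
        (by rw [hvr]; module),
        Nval t x y ht hx hy v hvr, abs_of_neg ha, hd_symm y hy x hx]
      ring
  · -- triangle inequality
    intro v hv w hw
    obtain ⟨t, x, y, ht, hx, hy, hvr⟩ := hspan v hv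
    obtain ⟨s, x', y', hs, hx', hy', hwr⟩ := hspan w hw
    rw [Nval t x y ht hx hy v hvr, Nval s x' y' hs hx' hy' w hwr]
    by_cases hts : t + s = 0
    · have ht0 : t = 0 := by linarith
      have hs0 : s = 0 := by linarith
      have hvw : v + w = (0:ℝ) • (x₀ - x₀) := by rw [hvr, hwr, ht0, hs0]; simp
      rw [Nval 0 x₀ x₀ (le_refl 0) hx₀ hx₀ (v + w) hvw, ht0, hs0]
      simp
    · have hT : (0:ℝ) < t + s := lt_of_le_of_ne (by linarith) (Ne.symm hts)
      have hc1 : 0 ≤ t / (t + s) := div_nonneg ht hT.le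
      have hc2 : 0 ≤ s / (t + s) := div_nonneg hs hT.le
      have hc3 : t / (t + s) + s / (t + s) = 1 := by field_simp
      set lam := t / (t + s) with hlamd
      set mu := s / (t + s) with hmud
      have hpX : lam • x + mu • x' ∈ X := hX hx hx' hc1 hc2 hc3
      have hqX : lam • y + mu • y' ∈ X := hX hy hy' hc1 hc2 hc3
      have hmidX : lam • x + mu • y' ∈ X := hX hx hy' hc1 hc2 hc3
      have hvw : v + w = (t + s) • ((lam • x + mu • x') - (lam • y + mu • y')) := by
        rw [hvr, hwr, hlamd, hmud]
        match_scalars <;> (field_simp; try ring)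
      rw [Nval (t + s) _ _ hT.le hpX hqX (v + w) hvw]
      -- d p q ≤ lam * d x y + mu * d x' y'
      have step1 : d (lam • x + mu • x') (lam • x + mu • y') ≤ mu * d x' y' := by
        have := hcontr x hx x' hx' y' hy' mu ⟨hc2, by linarith [hc1]⟩
        have e1 : mu • x' + (1 - mu) • x = lam • x + mu • x' := by
          rw [show (1:ℝ) - mu = lam by linarith]; module
        have e2 : mu • y' + (1 - mu) • x = lam • x + mu • y' := by
          rw [show (1:ℝ) - mu = lam by linarith]; module
        rwa [e1, e2] at this
      have step2 : d (lam • x + mu • y') (lam • y + mu • y') ≤ lam * d x y := by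
        have := hcontr y' hy' x hx y hy lam ⟨hc1, by linarith [hc2]⟩
        have e1 : lam • x + (1 - lam) • y' = lam • x + mu • y' := by
          rw [show (1:ℝ) - lam = mu by linarith]
        have e2 : lam • y + (1 - lam) • y' = lam • y + mu • y' := by
          rw [show (1:ℝ) - lam = mu by linarith]
        rwa [e1, e2] at this
      have tri := hd_tri (lam • x + mu • x') hpX (lam • x + mu • y') hmidX
        (lam • y + mu • y') hqX
      have hdpq : d (lam • x + mu • x') (lam • y + mu • y')
          ≤ lam * d x y + mu * d x' y' := by linarith
      have h1 : (t + s) * lam = t := by rw [hlamd]; field_simp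
      have h2 : (t + s) * mu = s := by rw [hmud]; field_simp
      calc (t + s) * d (lam • x + mu • x') (lam • y + mu • y')
          ≤ (t + s) * (lam * d x y + mu * d x' y') :=
            mul_le_mul_of_nonneg_left hdpq hT.le
        _ = ((t + s) * lam) * d x y + ((t + s) * mu) * d x' y' := by ring
        _ = t * d x y + s * d x' y' := by rw [h1, h2]
  · -- agrees with d
    intro x hx y hy
    rw [Nval 1 x y zero_le_one hx hy (x - y) (one_smul ℝ _).symm, one_mul]
end
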